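/- Let ≤ be a partial order on the finite player set N and let 𝒩 = {N_1, …, N_q} be a nested normal collection of downsets. If v is a convex game on O(N), then the restricted core equals the restricted Weber set: C_𝒩(v) = W_𝒩(v). -/

import Mathlib

open Finset

variable {ι : Type*}

/-- `S` is a downset (lower set) of the poset `ι`. -/
def IsDownset [PartialOrder ι] (S : Finset ι) : Prop :=
  ∀ ⦃i⦄, i ∈ S → ∀ ⦃j⦄, j ≤ i → j ∈ S

/-- A maximal chain `∅ = S_0 ⊊ S_1 ⊊ ⋯ ⊊ S_n = N` in `O(N)` (the collection of downsets),
with `|S_k| = k`, encoded as an increasing `ℕ`-indexed family of downsets with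
`(S k).card = k` for `k ≤ n`. -/
def MaximalChain [Fintype ι] [PartialOrder ι] (S : ℕ → Finset ι) : Prop :=
  (∀ k, IsDownset (S k)) ∧ (∀ k, S k ⊆ S (k + 1)) ∧
    ∀ k ≤ Fintype.card ι, (S k).card = k

/-- The marginal vector `x^C` of the chain `C = (S_k)_k` for the game `v`:
`x^C_i = v(S_k) - v(S_{k-1})` where `k` is the first index with `i ∈ S_k`. -/
noncomputable def marginal (v : Finset ι → ℝ) (S : ℕ → Finset ι) (i : ι) : ℝ :=
  v (S (sInf {k | i ∈ S k})) - v (S (sInf {k | i ∈ S k} - 1))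

/-- The core of a game `v` on `O(N)`. -/
def core [Fintype ι] [PartialOrder ι] (v : Finset ι → ℝ) : Set (ι → ℝ) :=
  {x | (∀ S : Finset ι, IsDownset S → v S ≤ ∑ a ∈ S, x a) ∧ ∑ a, x a = v Finset.univ}

/-- `𝒩` is a collection of downsets, all different from `N`. -/
def DownsetCollection [Fintype ι] [PartialOrder ι] (𝒩 : Finset (Finset ι)) : Prop :=
  ∀ A ∈ 𝒩, IsDownset A ∧ A ≠ Finset.univ

/-- `𝒩` is a normal collection: turning the core inequalities indexed by `𝒩` into
equalities makes the recession cone reduce to `{0}`. -/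
def NormalCollection [Fintype ι] [PartialOrder ι] (𝒩 : Finset (Finset ι)) : Prop :=
  DownsetCollection 𝒩 ∧
    {x : ι → ℝ | (∀ S : Finset ι, IsDownset S → 0 ≤ ∑ a ∈ S, x a) ∧
      (∑ a, x a) = 0 ∧ ∀ A ∈ 𝒩, ∑ a ∈ A, x a = 0} = {0}

/-- `𝒩` is nested: it is a chain under inclusion. -/
def Nested (𝒩 : Finset (Finset ι)) : Prop :=
  ∀ A ∈ 𝒩, ∀ B ∈ 𝒩, A ⊆ B ∨ B ⊆ A

/-- The restricted core `C_𝒩(v)`: elements of the core satisfying `x(A) = v(A)` for `A ∈ 𝒩`. -/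
def restrictedCore [Fintype ι] [PartialOrder ι] (𝒩 : Finset (Finset ι))
    (v : Finset ι → ℝ) : Set (ι → ℝ) :=
  {x ∈ core v | ∀ A ∈ 𝒩, ∑ a ∈ A, x a = v A}

/-- A restricted maximal chain: a maximal chain in `O(N)` passing through every `A ∈ 𝒩`. -/
def RestrictedChain [Fintype ι] [PartialOrder ι] (𝒩 : Finset (Finset ι))
    (S : ℕ → Finset ι) : Prop :=
  MaximalChain S ∧ ∀ A ∈ 𝒩, ∃ k, S k = A

/-- The restricted Weber set `W_𝒩(v)`: the convex hull of the marginal vectors of all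
restricted maximal chains. -/
def restrictedWeber [Fintype ι] [PartialOrder ι] (𝒩 : Finset (Finset ι))
    (v : Finset ι → ℝ) : Set (ι → ℝ) :=
  convexHull ℝ {x | ∃ S : ℕ → Finset ι, RestrictedChain 𝒩 S ∧ x = marginal v S}

/-!
Marginal vectors of restricted chains lie in `C_𝒩(v)` by supermodularity of `v`, and `C_𝒩(v)` is
convex, so `W_𝒩(v) ⊆ C_𝒩(v)`. Conversely, normality of `𝒩` makes `C_𝒩(v)` compact, so by
Krein–Milman it is the closed convex hull of its extreme points. At an extreme point `x` the
downsets on which `x` is tight form a lattice (by convexity of `v`) that separates players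
(otherwise `x ± ε (e_a - e_b)` both stay in `C_𝒩(v)`). Such a lattice, containing the chain `𝒩`,
refines to a maximal chain of tight downsets through `𝒩`, and `x` is its marginal vector.
-/

def IsConvexGame [PartialOrder ι] [DecidableEq ι] (v : Finset ι → ℝ) : Prop :=
  ∀ S T : Finset ι, IsDownset S → IsDownset T → v S + v T ≤ v (S ∪ T) + v (S ∩ T)

theorem IsDownset.inter [PartialOrder ι] [DecidableEq ι] {S T : Finset ι} (hS : IsDownset S)
    (hT : IsDownset T) : IsDownset (S ∩ T) := fun _ hi _ hj =>
  mem_inter.2 ⟨hS (mem_inter.1 hi).1 hj, hT (mem_inter.1 hi).2 hj⟩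

theorem IsDownset.union [PartialOrder ι] [DecidableEq ι] {S T : Finset ι} (hS : IsDownset S)
    (hT : IsDownset T) : IsDownset (S ∪ T) := fun _ hi _ hj =>
  mem_union.2 ((mem_union.1 hi).imp (fun h => hS h hj) (fun h => hT h hj))

theorem isDownset_univ [Fintype ι] [PartialOrder ι] : IsDownset (univ : Finset ι) :=
  fun _ _ _ _ => mem_univ _

namespace MaximalChain

variable [Fintype ι] [PartialOrder ι] {S : ℕ → Finset ι} (hS : MaximalChain S)
include hS

theorem monotone : Monotone S := monotone_nat_of_le_succ hS.2.1

theorem zero : S 0 = ∅ := card_eq_zero.1 (hS.2.2 0 (Nat.zero_le _))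

theorem eq_univ {k : ℕ} (hk : Fintype.card ι ≤ k) : S k = univ := by
  have htop : S (Fintype.card ι) = univ := eq_univ_of_card _ (hS.2.2 _ le_rfl)
  exact (subset_univ _).antisymm (htop ▸ hS.monotone hk)

theorem succ_eq_of_card_le {k : ℕ} (hk : Fintype.card ι ≤ k) : S (k + 1) = S k := by
  rw [hS.eq_univ hk, hS.eq_univ (by omega)]

theorem marginal_eq (v : Finset ι → ℝ) {i : ι} {k : ℕ} (h₁ : i ∈ S (k + 1)) (h₂ : i ∉ S k) :
    marginal v S i = v (S (k + 1)) - v (S k) := by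
  have hentry : sInf {k | i ∈ S k} = k + 1 :=
    (Nat.sInf_upward_closed_eq_succ_iff (fun _ _ hle h => hS.monotone hle h) k).2 ⟨h₁, h₂⟩
  rw [marginal, hentry, Nat.add_sub_cancel]

theorem exists_mem_succ_notMem (i : ι) : ∃ k, i ∈ S (k + 1) ∧ i ∉ S k := by
  obtain ⟨k, h₂, h₁⟩ := Nat.exists_not_and_succ_of_not_zero_of_exists (p := fun k => i ∈ S k)
    (by simp [hS.zero]) ⟨_, (hS.eq_univ le_rfl).symm ▸ mem_univ i⟩
  exact ⟨k, h₁, h₂⟩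

variable [DecidableEq ι]

theorem exists_eq_insert {k : ℕ} (hk : k + 1 ≤ Fintype.card ι) :
    ∃ i ∉ S k, S (k + 1) = insert i (S k) := by
  have hcard : (S (k + 1) \ S k).card = 1 := by
    rw [card_sdiff_of_subset (hS.2.1 k), hS.2.2 _ hk, hS.2.2 _ (by omega)]
    simp
  obtain ⟨i, hi⟩ := card_eq_one.1 hcard
  have hi' : i ∈ S (k + 1) \ S k := hi ▸ mem_singleton_self i
  refine ⟨i, (mem_sdiff.1 hi').2, ?_⟩
  rw [insert_eq, ← hi, sdiff_union_of_subset (hS.2.1 k)]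

theorem eq_insert {i : ι} {k : ℕ} (h₁ : i ∈ S (k + 1)) (h₂ : i ∉ S k) :
    S (k + 1) = insert i (S k) := by
  have hk : k + 1 ≤ Fintype.card ι := by
    by_contra! hk
    exact h₂ (hS.eq_univ (k := k) (by omega) ▸ mem_univ i)
  obtain ⟨j, -, hins⟩ := hS.exists_eq_insert hk
  rw [hins] at h₁ ⊢
  rw [(mem_insert.1 h₁).resolve_right h₂]

theorem sum_marginal {v : Finset ι → ℝ} (hv : v ∅ = 0) (k : ℕ) :
    ∑ a ∈ S k, marginal v S a = v (S k) := by
  induction k with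
  | zero => simp [hS.zero, hv]
  | succ k ih =>
    by_cases hk : k + 1 ≤ Fintype.card ι
    · obtain ⟨i, hi, hins⟩ := hS.exists_eq_insert hk
      rw [hins, sum_insert hi, ih, ← hins,
        hS.marginal_eq v (hins ▸ mem_insert_self i _) hi, sub_add_cancel]
    · rwa [hS.succ_eq_of_card_le (by omega)]

theorem marginal_eq_of_forall_sum_eq {v : Finset ι → ℝ} {x : ι → ℝ}
    (hx : ∀ k, ∑ a ∈ S k, x a = v (S k)) : marginal v S = x := by
  funext i
  obtain ⟨k, h₁, h₂⟩ := hS.exists_mem_succ_notMem i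
  have hsum := hx (k + 1)
  rw [hS.eq_insert h₁ h₂, sum_insert h₂, hx k, ← hS.eq_insert h₁ h₂] at hsum
  rw [hS.marginal_eq v h₁ h₂]
  linarith

/-- Convexity is used once per step of the chain, on `T ∩ S (k + 1)` and `S k`. -/
theorem le_sum_marginal {v : Finset ι → ℝ} (hv : v ∅ = 0) (hconv : IsConvexGame v)
    {T : Finset ι} (hT : IsDownset T) : v T ≤ ∑ a ∈ T, marginal v S a := by
  suffices h : ∀ k, v (T ∩ S k) ≤ ∑ a ∈ T ∩ S k, marginal v S a by
    simpa [hS.eq_univ le_rfl] using h (Fintype.card ι)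
  intro k
  induction k with
  | zero => simp [hS.zero, hv]
  | succ k ih =>
    by_cases hk : k + 1 ≤ Fintype.card ι
    · obtain ⟨i, hi, hins⟩ := hS.exists_eq_insert hk
      by_cases hiT : i ∈ T
      · have hstep := hconv _ _ (hT.inter (hS.1 (k + 1))) (hS.1 k)
        have hunion : T ∩ S (k + 1) ∪ S k = S (k + 1) := by
          rw [hins, inter_insert_of_mem hiT, insert_union, union_eq_right.2 inter_subset_right]
        have hinter : T ∩ S (k + 1) ∩ S k = T ∩ S k := by
          rw [inter_assoc, inter_eq_right.2 (hS.2.1 k)]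
        rw [hunion, hinter] at hstep
        rw [hins, inter_insert_of_mem hiT, sum_insert (fun h => hi (mem_inter.1 h).2),
          hS.marginal_eq v (hins ▸ mem_insert_self i _) hi, ← inter_insert_of_mem hiT, ← hins]
        linarith
      · rwa [hins, inter_insert_of_notMem hiT]
    · rwa [hS.succ_eq_of_card_le (by omega)]

end MaximalChain

theorem RestrictedChain.marginal_mem_restrictedCore [Fintype ι] [PartialOrder ι] [DecidableEq ι]
    {𝒩 : Finset (Finset ι)} {S : ℕ → Finset ι} (hS : RestrictedChain 𝒩 S)
    {v : Finset ι → ℝ} (hv : v ∅ = 0) (hconv : IsConvexGame v) :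
    marginal v S ∈ restrictedCore 𝒩 v := by
  refine ⟨⟨fun T hT => hS.1.le_sum_marginal hv hconv hT, ?_⟩, fun A hA => ?_⟩
  · simpa [hS.1.eq_univ le_rfl] using hS.1.sum_marginal hv (Fintype.card ι)
  · obtain ⟨k, rfl⟩ := hS.2 A hA
    exact hS.1.sum_marginal hv k

open Filter Topology

/-- The hypothesis says that the recession cone of `C` is `{0}`. -/
theorem Bornology.IsBounded.of_recession {E : Type*} [NormedAddCommGroup E] [NormedSpace ℝ E]
    [ProperSpace E] {C : Set E}
    (h : ∀ d : E, (∀ ℓ : E →L[ℝ] ℝ, BddBelow (ℓ '' C) → 0 ≤ ℓ d) → d = 0) :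
    Bornology.IsBounded C := by
  by_contra hC
  simp only [isBounded_iff_forall_norm_le, not_exists, not_forall, not_le] at hC
  choose x hxC hx using fun m : ℕ => hC m
  have hxpos : ∀ m, 0 < ‖x m‖ := fun m => (Nat.cast_nonneg m).trans_lt (hx m)
  have hunit : ∀ m, ‖x m‖⁻¹ • x m ∈ Metric.sphere (0 : E) 1 := fun m => by
    simp [norm_smul, (hxpos m).ne']
  obtain ⟨d, hd, φ, hφ, hlim⟩ := (isCompact_sphere (0 : E) 1).tendsto_subseq hunit
  have hinv : Tendsto (fun j => ‖x (φ j)‖⁻¹) atTop (𝓝 0) :=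
    (tendsto_atTop_mono (fun m => (hx m).le) tendsto_natCast_atTop_atTop |>.comp
      hφ.tendsto_atTop).inv_tendsto_atTop
  refine Metric.ne_of_mem_sphere hd one_ne_zero (h d fun ℓ ⟨b, hb⟩ => ?_)
  refine le_of_tendsto_of_tendsto' (by simpa using hinv.mul_const b)
    ((ℓ.continuous.tendsto d).comp hlim) fun j => ?_
  simpa [mul_comm] using
    mul_le_mul_of_nonneg_left (hb (Set.mem_image_of_mem ℓ (hxC (φ j)))) (by positivity)

def coordSum (S : Finset ι) : (ι → ℝ) →L[ℝ] ℝ := ∑ a ∈ S, ContinuousLinearMap.proj a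

@[simp]
theorem coordSum_apply (S : Finset ι) (x : ι → ℝ) : coordSum S x = ∑ a ∈ S, x a := by
  simp [coordSum]

section RestrictedCore

variable [Fintype ι] [PartialOrder ι] {𝒩 : Finset (Finset ι)} {v : Finset ι → ℝ}

theorem restrictedCore_eq_iInter : restrictedCore 𝒩 v =
    (⋂ (S) (_ : IsDownset S), {x | v S ≤ coordSum S x}) ∩ {x | coordSum univ x = v univ} ∩
      ⋂ A ∈ 𝒩, {x | coordSum A x = v A} := by
  ext x
  simp [restrictedCore, core, and_assoc]

theorem convex_restrictedCore : Convex ℝ (restrictedCore 𝒩 v) := by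
  rw [restrictedCore_eq_iInter]
  refine ((convex_iInter₂ fun S _ => ?_).inter ?_).inter (convex_iInter₂ fun A _ => ?_)
  · exact convex_halfSpace_ge (coordSum S).toLinearMap.isLinear _
  · exact convex_hyperplane (coordSum univ).toLinearMap.isLinear _
  · exact convex_hyperplane (coordSum A).toLinearMap.isLinear _

theorem isClosed_restrictedCore : IsClosed (restrictedCore 𝒩 v) := by
  rw [restrictedCore_eq_iInter]
  refine ((isClosed_biInter fun S _ => ?_).inter ?_).inter (isClosed_biInter fun A _ => ?_)
  · exact isClosed_le continuous_const (coordSum S).continuous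
  · exact isClosed_eq (coordSum univ).continuous continuous_const
  · exact isClosed_eq (coordSum A).continuous continuous_const

theorem isBounded_restrictedCore (hnormal : NormalCollection 𝒩) :
    Bornology.IsBounded (restrictedCore 𝒩 v) := by
  refine .of_recession fun d hd => ?_
  have hsum_eq : ∀ A, (∀ x ∈ restrictedCore 𝒩 v, ∑ a ∈ A, x a = v A) → ∑ a ∈ A, d a = 0 := by
    intro A hA
    have h₁ := hd (coordSum A) ⟨v A, by rintro _ ⟨x, hx, rfl⟩; simp [hA x hx]⟩
    have h₂ := hd (-coordSum A) ⟨-v A, by rintro _ ⟨x, hx, rfl⟩; simp [hA x hx]⟩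
    simp only [coordSum_apply, neg_apply] at h₁ h₂
    linarith
  have hsum_nonneg : ∀ S, IsDownset S → 0 ≤ ∑ a ∈ S, d a := fun S hS => by
    simpa using hd (coordSum S) ⟨v S, by rintro _ ⟨x, hx, rfl⟩; simpa using hx.1.1 S hS⟩
  have hmem : d ∈ ({0} : Set (ι → ℝ)) := hnormal.2 ▸
    ⟨hsum_nonneg, hsum_eq univ fun x hx => hx.1.2, fun A hA => hsum_eq A fun x hx => hx.2 A hA⟩
  exact hmem

theorem isCompact_restrictedCore (hnormal : NormalCollection 𝒩) :
    IsCompact (restrictedCore 𝒩 v) :=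
  Metric.isCompact_of_isClosed_isBounded isClosed_restrictedCore (isBounded_restrictedCore hnormal)

end RestrictedCore

def tightSets [PartialOrder ι] (v : Finset ι → ℝ) (x : ι → ℝ) : Set (Finset ι) :=
  {S | IsDownset S ∧ ∑ a ∈ S, x a = v S}

section TightSets

variable [Fintype ι] [PartialOrder ι] {𝒩 : Finset (Finset ι)}
  {v : Finset ι → ℝ} {x : ι → ℝ}

theorem eventually_add_smul_mem_restrictedCore (h𝒩 : DownsetCollection 𝒩)
    (hx : x ∈ restrictedCore 𝒩 v) {y : ι → ℝ} (hy : ∀ S ∈ tightSets v x, ∑ a ∈ S, y a = 0) :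
    ∀ᶠ c in 𝓝 (0 : ℝ), x + c • y ∈ restrictedCore 𝒩 v := by
  have hsum : ∀ (c : ℝ) S, ∑ a ∈ S, (x + c • y) a = ∑ a ∈ S, x a + c * ∑ a ∈ S, y a := by
    simp [sum_add_distrib, mul_sum]
  have htight : ∀ S ∈ tightSets v x, ∀ c : ℝ, ∑ a ∈ S, (x + c • y) a = v S := fun S hS c => by
    rw [hsum, hy S hS, mul_zero, add_zero, hS.2]
  have hlower : ∀ S, ∀ᶠ c in 𝓝 (0 : ℝ), IsDownset S → v S ≤ ∑ a ∈ S, (x + c • y) a := by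
    intro S
    by_cases hS : S ∈ tightSets v x
    · exact .of_forall fun c _ => (htight S hS c).ge
    by_cases hdown : IsDownset S
    · have hlt : v S < ∑ a ∈ S, x a := (hx.1.1 S hdown).lt_of_ne fun h => hS ⟨hdown, h.symm⟩
      have hcont : Tendsto (fun c : ℝ => ∑ a ∈ S, x a + c * ∑ a ∈ S, y a) (𝓝 0)
          (𝓝 (∑ a ∈ S, x a)) := by
        simpa using ((tendsto_id (x := 𝓝 (0 : ℝ))).mul_const (∑ a ∈ S, y a)).const_add _
      exact (hcont.eventually_const_lt hlt).mono fun c hc _ => (hsum c S).symm ▸ hc.le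
    · exact .of_forall fun c h => absurd h hdown
  filter_upwards [eventually_all.2 hlower] with c hc
  exact ⟨⟨hc, htight univ ⟨isDownset_univ, hx.1.2⟩ c⟩,
    fun A hA => htight A ⟨(h𝒩 A hA).1, hx.2 A hA⟩ c⟩

theorem eq_zero_of_forall_sum_tightSets_eq_zero (h𝒩 : DownsetCollection 𝒩)
    (hx : x ∈ (restrictedCore 𝒩 v).extremePoints ℝ) {y : ι → ℝ}
    (hy : ∀ S ∈ tightSets v x, ∑ a ∈ S, y a = 0) : y = 0 := by
  obtain ⟨ε, hε, hball⟩ :=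
    Metric.eventually_nhds_iff.1 (eventually_add_smul_mem_restrictedCore h𝒩 hx.1 hy)
  have hpos := @hball (ε / 2) (by simp [abs_of_pos hε]; linarith)
  have hneg := @hball (-(ε / 2)) (by simp [abs_of_pos hε]; linarith)
  have hmid : x ∈ openSegment ℝ (x + (ε / 2) • y) (x + (-(ε / 2)) • y) :=
    ⟨1 / 2, 1 / 2, by norm_num, by norm_num, by norm_num, by ext; simp; ring⟩
  simpa [hε.ne'] using hx.2 hpos hneg hmid

variable [DecidableEq ι]

theorem union_inter_mem_tightSets (hx : x ∈ core v) (hconv : IsConvexGame v)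
    {S T : Finset ι} (hS : S ∈ tightSets v x) (hT : T ∈ tightSets v x) :
    S ∪ T ∈ tightSets v x ∧ S ∩ T ∈ tightSets v x := by
  have hunion := hx.1 _ (hS.1.union hT.1)
  have hinter := hx.1 _ (hS.1.inter hT.1)
  have hsum : ∑ a ∈ S ∪ T, x a + ∑ a ∈ S ∩ T, x a = ∑ a ∈ S, x a + ∑ a ∈ T, x a :=
    sum_union_inter
  have := hconv S T hS.1 hT.1
  exact ⟨⟨hS.1.union hT.1, by linarith [hS.2, hT.2]⟩, ⟨hS.1.inter hT.1, by linarith [hS.2, hT.2]⟩⟩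

theorem supClosed_tightSets (hx : x ∈ core v) (hconv : IsConvexGame v) :
    SupClosed (tightSets v x) := fun _ hS _ hT => (union_inter_mem_tightSets hx hconv hS hT).1

theorem infClosed_tightSets (hx : x ∈ core v) (hconv : IsConvexGame v) :
    InfClosed (tightSets v x) := fun _ hS _ hT => (union_inter_mem_tightSets hx hconv hS hT).2

theorem eq_of_forall_mem_tightSets_iff (h𝒩 : DownsetCollection 𝒩)
    (hx : x ∈ (restrictedCore 𝒩 v).extremePoints ℝ) {a b : ι}
    (hab : ∀ S ∈ tightSets v x, a ∈ S ↔ b ∈ S) : a = b := by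
  by_contra hne
  have hy := eq_zero_of_forall_sum_tightSets_eq_zero h𝒩 hx
    (y := Pi.single a 1 - Pi.single b 1) fun S hS => by
      simp [sum_sub_distrib, sum_pi_single', hab S hS]
  simpa [hne] using congr_fun hy a

end TightSets

section Lattice

variable [DecidableEq ι] {𝒯 : Set (Finset ι)}

/-- If `T ⊂ B` gained two points `c, d`, a member of `𝒯` separating them cuts out
`(S ∩ B) ∪ T`, strictly between `T` and `B`; descend until one point is gained. -/
theorem exists_mem_card_succ_of_ssubset (hsup : SupClosed 𝒯) (hinf : InfClosed 𝒯)
    (hsep : ∀ a b, (∀ S ∈ 𝒯, a ∈ S ↔ b ∈ S) → a = b) {T B : Finset ι} (hT : T ∈ 𝒯)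
    (hB : B ∈ 𝒯) (hTB : T ⊂ B) : ∃ T' ∈ 𝒯, T ⊆ T' ∧ T' ⊆ B ∧ T'.card = T.card + 1 := by
  induction B using strongInduction with
  | H B ih =>
  by_cases hcard : B.card = T.card + 1
  · exact ⟨B, hB, hTB.subset, subset_rfl, hcard⟩
  have htwo : 1 < (B \ T).card := by
    have := card_lt_card hTB
    rw [card_sdiff_of_subset hTB.subset]
    omega
  obtain ⟨a, ha, b, hb, hab⟩ := one_lt_card.1 htwo
  obtain ⟨S, hS, hSab⟩ : ∃ S ∈ 𝒯, ¬(a ∈ S ↔ b ∈ S) := by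
    by_contra! h
    exact hab (hsep a b h)
  obtain ⟨c, hc, d, hd, hcS, hdS⟩ : ∃ c ∈ B \ T, ∃ d ∈ B \ T, c ∈ S ∧ d ∉ S := by
    by_cases haS : a ∈ S
    · exact ⟨a, ha, b, hb, haS, fun hbS => hSab (iff_of_true haS hbS)⟩
    · exact ⟨b, hb, a, ha, by tauto, haS⟩
  rw [Finset.mem_sdiff] at hc hd
  have hB'B : S ∩ B ∪ T ⊂ B := (ssubset_iff_of_subset (union_subset inter_subset_right
    hTB.subset)).2 ⟨d, hd.1, by simp [hdS, hd.2]⟩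
  have hTB' : T ⊂ S ∩ B ∪ T :=
    (ssubset_iff_of_subset subset_union_right).2 ⟨c, by simp [hcS, hc.1], hc.2⟩
  obtain ⟨T', hT', hTT', hT'B', hcard'⟩ := ih _ hB'B (hsup (hinf hS hB) hT) hTB'
  exact ⟨T', hT', hTT', hT'B'.trans hB'B.subset, hcard'⟩

theorem exists_mem_card_succ_of_nested [Fintype ι] (hsup : SupClosed 𝒯) (hinf : InfClosed 𝒯)
    (hsep : ∀ a b, (∀ S ∈ 𝒯, a ∈ S ↔ b ∈ S) → a = b) (huniv : univ ∈ 𝒯)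
    {𝒩 : Finset (Finset ι)} (h𝒩 : ∀ A ∈ 𝒩, A ∈ 𝒯) (hnested : Nested 𝒩) {T : Finset ι}
    (hT : T ∈ 𝒯) (hTne : T ≠ univ) (hcomp : ∀ A ∈ 𝒩, A ⊆ T ∨ T ⊆ A) :
    ∃ T' ∈ 𝒯, T ⊆ T' ∧ T'.card = T.card + 1 ∧ ∀ A ∈ 𝒩, A ⊆ T' ∨ T' ⊆ A := by
  classical
  set 𝒞 := insert univ (𝒩.filter fun A => ¬A ⊆ T)
  have hchain : ∀ C ∈ 𝒞, ∀ D ∈ 𝒞, C ⊆ D ∨ D ⊆ C := by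
    simp only [𝒞, mem_insert, mem_filter]
    rintro C (rfl | ⟨hC, -⟩) D (rfl | ⟨hD, -⟩)
    exacts [.inl subset_rfl, .inr (subset_univ D), .inl (subset_univ C), hnested C hC D hD]
  obtain ⟨B, hB𝒞, hBmin⟩ := exists_min_image 𝒞 card (insert_nonempty _ _)
  have hBle : ∀ C ∈ 𝒞, B ⊆ C := fun C hC =>
    (hchain B hB𝒞 C hC).elim id fun hCB => (eq_of_subset_of_card_le hCB (hBmin C hC)).symm.subset
  obtain ⟨hB, hTB⟩ : B ∈ 𝒯 ∧ T ⊂ B := by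
    rcases mem_insert.1 hB𝒞 with rfl | hB
    · exact ⟨huniv, ssubset_univ_iff.2 hTne⟩
    · obtain ⟨hB𝒩, hBT⟩ := mem_filter.1 hB
      exact ⟨h𝒩 B hB𝒩, ssubset_of_subset_not_subset ((hcomp B hB𝒩).resolve_left hBT) hBT⟩
  obtain ⟨T', hT', hTT', hT'B, hcard⟩ := exists_mem_card_succ_of_ssubset hsup hinf hsep hT hB hTB
  refine ⟨T', hT', hTT', hcard, fun A hA => ?_⟩
  by_cases hAT : A ⊆ T
  · exact .inl (hAT.trans hTT')
  · exact .inr (hT'B.trans (hBle A (mem_insert_of_mem (mem_filter.2 ⟨hA, hAT⟩))))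

end Lattice

theorem exists_chain_of_forall_exists_card_succ [Fintype ι] {P : Finset ι → Prop} (h0 : P ∅)
    (hstep : ∀ T, P T → T ≠ univ → ∃ T', P T' ∧ T ⊆ T' ∧ T'.card = T.card + 1) :
    ∃ S : ℕ → Finset ι, (∀ k, P (S k)) ∧ (∀ k, S k ⊆ S (k + 1)) ∧
      ∀ k ≤ Fintype.card ι, (S k).card = k := by
  classical
  choose! f hf using hstep
  let g : Finset ι → Finset ι := fun T => if T = univ then univ else f T
  have hg : ∀ T, P T → P (g T) ∧ T ⊆ g T ∧ (g T).card = min (T.card + 1) (Fintype.card ι) := by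
    intro T hT
    by_cases hTu : T = univ
    · subst hTu
      simp [g, hT]
    · obtain ⟨hPf, hTf, hcard⟩ := hf T hT hTu
      have := (card_lt_iff_ne_univ T).2 hTu
      simp only [g, hTu, if_false]
      exact ⟨hPf, hTf, by omega⟩
  have key : ∀ k, P (g^[k] ∅) ∧ (g^[k] ∅).card = min k (Fintype.card ι) := by
    intro k
    induction k with
    | zero => simp [h0]
    | succ k ih =>
      obtain ⟨hP, -, hcard⟩ := hg _ ih.1
      rw [Function.iterate_succ_apply']
      exact ⟨hP, by omega⟩
  refine ⟨fun k => g^[k] ∅, fun k => (key k).1, fun k => ?_,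
    fun k hk => (key k).2.trans (min_eq_left hk)⟩
  simpa only [Function.iterate_succ_apply'] using (hg _ (key k).1).2.1

theorem finite_range_marginal [Finite ι] (v : Finset ι → ℝ) :
    (Set.range (marginal v : (ℕ → Finset ι) → ι → ℝ)).Finite :=
  (Set.finite_range fun g : ι → Finset ι × Finset ι => fun i => v (g i).1 - v (g i).2).subset <| by
    rintro _ ⟨S, rfl⟩
    exact ⟨fun i => (S (sInf {k | i ∈ S k}), S (sInf {k | i ∈ S k} - 1)), rfl⟩

theorem exists_restrictedChain_marginal_eq_of_mem_extremePoints [Fintype ι] [PartialOrder ι]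
    [DecidableEq ι] {𝒩 : Finset (Finset ι)} {v : Finset ι → ℝ} {x : ι → ℝ}
    (hnormal : NormalCollection 𝒩) (hnested : Nested 𝒩) (hv : v ∅ = 0) (hconv : IsConvexGame v)
    (hx : x ∈ (restrictedCore 𝒩 v).extremePoints ℝ) :
    ∃ S, RestrictedChain 𝒩 S ∧ marginal v S = x := by
  have hcore := hx.1.1
  obtain ⟨S, hPS, hmono, hcard⟩ := exists_chain_of_forall_exists_card_succ
    (P := fun T => T ∈ tightSets v x ∧ ∀ A ∈ 𝒩, A ⊆ T ∨ T ⊆ A)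
    ⟨⟨fun _ h => absurd h (notMem_empty _), by simp [hv]⟩, fun A _ => .inr (empty_subset A)⟩
    fun T hT hTne => by
      obtain ⟨T', hT', hTT', hcard, hcomp⟩ := exists_mem_card_succ_of_nested
        (supClosed_tightSets hcore hconv) (infClosed_tightSets hcore hconv)
        (fun _ _ => eq_of_forall_mem_tightSets_iff hnormal.1 hx) ⟨isDownset_univ, hcore.2⟩
        (fun A hA => ⟨(hnormal.1 A hA).1, hx.1.2 A hA⟩) hnested hT.1 hTne hT.2
      exact ⟨T', ⟨hT', hcomp⟩, hTT', hcard⟩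
  have hS : MaximalChain S := ⟨fun k => (hPS k).1.1, hmono, hcard⟩
  refine ⟨S, ⟨hS, fun A hA => ⟨A.card, ?_⟩⟩, hS.marginal_eq_of_forall_sum_eq fun k => (hPS k).1.2⟩
  have hAcard : (S A.card).card = A.card := hcard _ (card_le_univ A)
  rcases (hPS A.card).2 A hA with h | h
  · exact (eq_of_subset_of_card_le h hAcard.le).symm
  · exact eq_of_subset_of_card_le h hAcard.ge

/-- for a nested normal collection `𝒩` and a convex game `v` on `O(N)`,
the restricted core equals the restricted Weber set. -/
theorem restrictedCore_eq_restrictedWeber_of_convex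
    [Fintype ι] [DecidableEq ι] [PartialOrder ι] (𝒩 : Finset (Finset ι))
    (hnormal : NormalCollection 𝒩) (hnested : Nested 𝒩)
    (v : Finset ι → ℝ) (hv : v ∅ = 0)
    (hconv : ∀ S T : Finset ι, IsDownset S → IsDownset T →
      v S + v T ≤ v (S ∪ T) + v (S ∩ T)) :
    restrictedCore 𝒩 v = restrictedWeber 𝒩 v := by
  have hfinite : {x | ∃ S : ℕ → Finset ι, RestrictedChain 𝒩 S ∧ x = marginal v S}.Finite :=
    (finite_range_marginal v).subset fun _ ⟨S, _, hx⟩ => ⟨S, hx.symm⟩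
  refine Set.Subset.antisymm ?_ (convexHull_min ?_ convex_restrictedCore)
  · have hext : (restrictedCore 𝒩 v).extremePoints ℝ ⊆ restrictedWeber 𝒩 v := fun x hx =>
      let ⟨S, hS, hSx⟩ :=
        exists_restrictedChain_marginal_eq_of_mem_extremePoints hnormal hnested hv hconv hx
      subset_convexHull ℝ _ ⟨S, hS, hSx.symm⟩
    calc restrictedCore 𝒩 v
        = closure (convexHull ℝ ((restrictedCore 𝒩 v).extremePoints ℝ)) :=
          (closure_convexHull_extremePoints (isCompact_restrictedCore hnormal)
            convex_restrictedCore).symm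
      _ ⊆ closure (restrictedWeber 𝒩 v) :=
          closure_mono (convexHull_min hext (convex_convexHull ℝ _))
      _ = restrictedWeber 𝒩 v := (hfinite.isClosed_convexHull (𝕜 := ℝ)).closure_eq
  · rintro _ ⟨S, hS, rfl⟩
    exact hS.marginal_mem_restrictedCore hv hconv
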